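/- arXiv:2505.00283 — 4 statements merged into one kernel-verified Lean document; each statement's English description precedes it below -/
import Mathlib

section
/- Let p, q be positive integers, Σ and Σ̂ real p×p matrices, H a real q×p matrix and R a real q×q matrix such that both H Σ Hᵀ + R and H Σ̂ Hᵀ + R are invertible. Set K = Σ Hᵀ (H Σ Hᵀ + R)⁻¹ and K̂ = Σ̂ Hᵀ (H Σ̂ Hᵀ + R)⁻¹. Then K̂ − K = (I − K H)(Σ̂ − Σ) Hᵀ (H Σ̂ Hᵀ + R)⁻¹, where I is the p×p identity matrix. -/
open Matrix

/-- For real matrices `Σ, Σ̂` (p×p), `H` (q×p), `R` (q×q) with both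
`H Σ Hᵀ + R` and `H Σ̂ Hᵀ + R` invertible, the Kalman gains
`K = Σ Hᵀ (H Σ Hᵀ + R)⁻¹` and `K̂ = Σ̂ Hᵀ (H Σ̂ Hᵀ + R)⁻¹` satisfy
`K̂ − K = (I − K H)(Σ̂ − Σ) Hᵀ (H Σ̂ Hᵀ + R)⁻¹`. -/
theorem kalman_gain_diff_identity (p q : ℕ) (hp : 0 < p) (hq : 0 < q)
    (S Shat : Matrix (Fin p) (Fin p) ℝ) (H : Matrix (Fin q) (Fin p) ℝ)
    (R : Matrix (Fin q) (Fin q) ℝ)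
    (h1 : IsUnit (H * S * Hᵀ + R).det) (h2 : IsUnit (H * Shat * Hᵀ + R).det) :
    Shat * Hᵀ * (H * Shat * Hᵀ + R)⁻¹ - S * Hᵀ * (H * S * Hᵀ + R)⁻¹ =
      ((1 : Matrix (Fin p) (Fin p) ℝ) - S * Hᵀ * (H * S * Hᵀ + R)⁻¹ * H) * (Shat - S) * Hᵀ *
        (H * Shat * Hᵀ + R)⁻¹ := by
  set A := H * S * Hᵀ + R with hA
  set B := H * Shat * Hᵀ + R with hB
  set K := S * Hᵀ * A⁻¹ with hKdef
  have hBinv : B * B⁻¹ = 1 := Matrix.mul_nonsing_inv _ h2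
  have hK : K * A = S * Hᵀ := by
    rw [hKdef, Matrix.mul_assoc, Matrix.nonsing_inv_mul _ h1, Matrix.mul_one]
  have hSH : K * (H * (S * Hᵀ)) + K * R = S * Hᵀ := by
    conv_rhs => rw [← hK, hA]
    rw [Matrix.mul_add, Matrix.mul_assoc H S Hᵀ]
  have key : Shat * Hᵀ - K * B = (1 - K * H) * (Shat - S) * Hᵀ := by
    have expand : (1 - K * H) * (Shat - S) * Hᵀ
        = Shat * Hᵀ - S * Hᵀ - K * (H * (Shat * Hᵀ)) + K * (H * (S * Hᵀ)) := by
      simp only [Matrix.sub_mul, Matrix.mul_sub, Matrix.one_mul, Matrix.mul_assoc]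
      abel
    rw [expand]
    nth_rewrite 1 [← hSH]
    rw [hB, Matrix.mul_assoc H Shat Hᵀ, Matrix.mul_add]
    abel
  have hstep : (Shat * Hᵀ - K * B) * B⁻¹ = Shat * Hᵀ * B⁻¹ - K := by
    rw [Matrix.sub_mul, Matrix.mul_assoc K B B⁻¹, hBinv, Matrix.mul_one]
  rw [← hstep, key]
end

section
/- Let p, q be positive integers, Σ a real p×p matrix, Σ̂ a real symmetric positive semidefinite p×p matrix, H a real q×p matrix, and R a real symmetric positive definite q×q matrix such that H Σ Hᵀ + R is invertible. Set K = Σ Hᵀ (H Σ Hᵀ + R)⁻¹ and K̂ = Σ̂ Hᵀ (H Σ̂ Hᵀ + R)⁻¹. Then ‖K̂ − K‖ ≤ λmin(R)⁻¹ · ‖I − K H‖ · ‖H‖ · ‖Σ̂ − Σ‖. -/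
/-!
With `A = H Σ Hᵀ + R` and `Â = H Σ̂ Hᵀ + R` we have `H (Σ̂ - Σ) Hᵀ = Â - A`, which gives the
identity `K̂ - K = (I - K H) (Σ̂ - Σ) Hᵀ Â⁻¹`. Submultiplicativity of the spectral norm then
reduces the bound to `‖Â⁻¹‖ ≤ λmin(R)⁻¹`: in the Loewner order `λmin(R) • I ≤ R ≤ Â`, so the
spectrum of `Â` lies in `[λmin(R), ∞)`, and `Â⁻¹` is the continuous functional calculus of
`x ↦ x⁻¹` at `Â`.
-/

open Matrix
open scoped Matrix.Norms.L2Operator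

/-- The smallest eigenvalue of a Hermitian real matrix. -/
noncomputable def lamMin {m : ℕ} {A : Matrix (Fin m) (Fin m) ℝ} (hA : A.IsHermitian) : ℝ :=
  ⨅ i, hA.eigenvalues i

open scoped MatrixOrder

theorem Matrix.IsHermitian.algebraMap_lamMin_le {m : ℕ} {A : Matrix (Fin m) (Fin m) ℝ}
    (hA : A.IsHermitian) : algebraMap ℝ _ (lamMin hA) ≤ A := by
  refine algebraMap_le_of_le_spectrum (fun x hx => ?_) hA.isSelfAdjoint
  rw [hA.spectrum_real_eq_range_eigenvalues] at hx
  obtain ⟨i, rfl⟩ := hx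
  exact ciInf_le (Set.finite_range _).bddBelow i

theorem Matrix.PosDef.lamMin_pos {m : ℕ} [NeZero m] {A : Matrix (Fin m) (Fin m) ℝ}
    (hA : A.PosDef) : 0 < lamMin hA.1 := by
  obtain ⟨i, hi⟩ := Finite.exists_min hA.1.eigenvalues
  exact (hA.eigenvalues_pos i).trans_le (le_ciInf hi)

theorem Matrix.l2_opNorm_inv_le_inv_of_algebraMap_le {n : Type*} [Fintype n] [DecidableEq n]
    {A : Matrix n n ℝ} {c : ℝ} (hc : 0 < c) (hA : algebraMap ℝ _ c ≤ A) : ‖A⁻¹‖ ≤ c⁻¹ := by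
  have hA_sa : IsSelfAdjoint A := by
    simpa using (IsSelfAdjoint.algebraMap _ (.all c)).add hA.isHermitian.isSelfAdjoint
  have hspec : ∀ x ∈ spectrum ℝ A, c ≤ x := (algebraMap_le_iff_le_spectrum hA_sa).1 hA
  have hspec_pos : ∀ x ∈ spectrum ℝ A, 0 < x := fun x hx => hc.trans_le (hspec x hx)
  rw [nonsing_inv_eq_ringInverse, ← cfc_id' ℝ A, ← cfc_inv _ _ fun x hx => (hspec_pos x hx).ne']
  refine norm_cfc_le (inv_nonneg.2 hc.le) fun x hx => ?_
  rw [Real.norm_eq_abs, abs_inv, abs_of_pos (hspec_pos x hx)]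
  exact inv_anti₀ hc (hspec x hx)

theorem Matrix.l2_opNorm_inv_add_le_inv_lamMin {m : ℕ} {P R : Matrix (Fin m) (Fin m) ℝ}
    (hP : P.PosSemidef) (hR : R.PosDef) : ‖(P + R)⁻¹‖ ≤ (lamMin hR.1)⁻¹ := by
  rcases Nat.eq_zero_or_pos m with rfl | hm
  -- for `m = 0` both sides are `0`: the empty infimum defining `lamMin` is `0`
  · simp [Subsingleton.elim (P + R)⁻¹ 0, lamMin]
  · have : NeZero m := ⟨hm.ne'⟩
    exact l2_opNorm_inv_le_inv_of_algebraMap_le hR.lamMin_pos <|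
      hR.1.algebraMap_lamMin_le.trans (le_add_of_nonneg_left hP.nonneg)

theorem Matrix.l2_opNorm_transpose {m n : Type*} [Fintype m] [Fintype n] [DecidableEq m]
    [DecidableEq n] (A : Matrix m n ℝ) : ‖Aᵀ‖ = ‖A‖ := by
  rw [← conjTranspose_eq_transpose_of_trivial, l2_opNorm_conjTranspose]

section KalmanGain

variable {α m n : Type*} [CommRing α] [Fintype m] [Fintype n] [DecidableEq m] [DecidableEq n]

noncomputable def kalmanGain (S : Matrix n n α) (H : Matrix m n α) (R : Matrix m m α) :
    Matrix n m α :=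
  S * Hᵀ * (H * S * Hᵀ + R)⁻¹

theorem kalmanGain_sub_kalmanGain {S S' : Matrix n n α} {H : Matrix m n α} {R : Matrix m m α}
    (hS : IsUnit (H * S * Hᵀ + R).det) (hS' : IsUnit (H * S' * Hᵀ + R).det) :
    kalmanGain S' H R - kalmanGain S H R =
      (1 - kalmanGain S H R * H) * (S' - S) * Hᵀ * (H * S' * Hᵀ + R)⁻¹ := by
  simp only [kalmanGain]
  set A := H * S * Hᵀ + R
  set B := H * S' * Hᵀ + R
  have hBA : H * (S' - S) * Hᵀ = B - A := by
    simp only [A, B, Matrix.mul_sub, Matrix.sub_mul]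
    abel
  have hcorr : S * Hᵀ * A⁻¹ * H * (S' - S) * Hᵀ * B⁻¹ = S * Hᵀ * A⁻¹ - S * Hᵀ * B⁻¹ := calc
    _ = S * Hᵀ * (A⁻¹ * (H * (S' - S) * Hᵀ) * B⁻¹) := by simp only [Matrix.mul_assoc]
    _ = S * Hᵀ * (A⁻¹ * (B * B⁻¹) - A⁻¹ * A * B⁻¹) := by
      rw [hBA]
      simp only [Matrix.mul_sub, Matrix.sub_mul, Matrix.mul_assoc]
    _ = S * Hᵀ * A⁻¹ - S * Hᵀ * B⁻¹ := by
      rw [mul_nonsing_inv B hS', nonsing_inv_mul A hS, Matrix.mul_one, Matrix.one_mul,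
        Matrix.mul_sub]
  rw [Matrix.sub_mul, Matrix.sub_mul, Matrix.sub_mul, hcorr]
  simp only [Matrix.one_mul, Matrix.sub_mul, Matrix.mul_assoc]
  abel

end KalmanGain

theorem kalman_gain_error_bound_general (p q : ℕ)
    (S Shat : Matrix (Fin p) (Fin p) ℝ) (H : Matrix (Fin q) (Fin p) ℝ)
    (R : Matrix (Fin q) (Fin q) ℝ)
    (hShat : Shat.PosSemidef) (hR : R.PosDef)
    (h1 : IsUnit (H * S * Hᵀ + R).det) :
    ‖Shat * Hᵀ * (H * Shat * Hᵀ + R)⁻¹ - S * Hᵀ * (H * S * Hᵀ + R)⁻¹‖ ≤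
      (lamMin hR.1)⁻¹ *
        ‖(1 : Matrix (Fin p) (Fin p) ℝ) - S * Hᵀ * (H * S * Hᵀ + R)⁻¹ * H‖ *
        ‖H‖ * ‖Shat - S‖ := by
  have hHSH : (H * Shat * Hᵀ).PosSemidef := by
    simpa [conjTranspose_eq_transpose_of_trivial] using hShat.mul_mul_conjTranspose_same H
  have h2 : IsUnit (H * Shat * Hᵀ + R).det := (PosDef.posSemidef_add hHSH hR).det_pos.ne'.isUnit
  change ‖kalmanGain Shat H R - kalmanGain S H R‖ ≤ _ * ‖1 - kalmanGain S H R * H‖ * _ * _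
  rw [kalmanGain_sub_kalmanGain h1 h2]
  calc _ ≤ ‖1 - kalmanGain S H R * H‖ * ‖Shat - S‖ * ‖Hᵀ‖ * ‖(H * Shat * Hᵀ + R)⁻¹‖ := by
        refine (l2_opNorm_mul _ _).trans ?_
        gcongr
        refine (l2_opNorm_mul _ _).trans ?_
        gcongr
        exact l2_opNorm_mul _ _
    _ ≤ ‖1 - kalmanGain S H R * H‖ * ‖Shat - S‖ * ‖H‖ * (lamMin hR.1)⁻¹ := by
      rw [l2_opNorm_transpose]
      gcongr
      exact l2_opNorm_inv_add_le_inv_lamMin hHSH hR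
    _ = _ := by ring

/-- **Lemma 1 of the paper.** If `Σ̂` is symmetric positive semidefinite,
`R` is symmetric positive definite, and `H Σ Hᵀ + R` is invertible, then the Kalman gains
`K = Σ Hᵀ (H Σ Hᵀ + R)⁻¹` and `K̂ = Σ̂ Hᵀ (H Σ̂ Hᵀ + R)⁻¹` satisfy
`‖K̂ − K‖ ≤ λmin(R)⁻¹ ‖I − K H‖ ‖H‖ ‖Σ̂ − Σ‖` in the spectral norm. -/
theorem kalman_gain_error_bound (p q : ℕ) (hp : 0 < p) (hq : 0 < q)
    (S Shat : Matrix (Fin p) (Fin p) ℝ) (H : Matrix (Fin q) (Fin p) ℝ)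
    (R : Matrix (Fin q) (Fin q) ℝ)
    (hShat : Shat.PosSemidef) (hR : R.PosDef)
    (h1 : IsUnit (H * S * Hᵀ + R).det) :
    ‖Shat * Hᵀ * (H * Shat * Hᵀ + R)⁻¹ - S * Hᵀ * (H * S * Hᵀ + R)⁻¹‖ ≤
      (lamMin hR.1)⁻¹ *
        ‖(1 : Matrix (Fin p) (Fin p) ℝ) - S * Hᵀ * (H * S * Hᵀ + R)⁻¹ * H‖ *
        ‖H‖ * ‖Shat - S‖ :=
  kalman_gain_error_bound_general p q S Shat H R hShat hR h1
end

section
/- Let p, q be positive integers, Σ and Σ̂ real p×p matrices, H a real q×p matrix, and R, R̂ real q×q matrices such that H Σ Hᵀ + R and H Σ̂ Hᵀ + R̂ are invertible. Set K = Σ Hᵀ (H Σ Hᵀ + R)⁻¹ and K̂ = Σ̂ Hᵀ (H Σ̂ Hᵀ + R̂)⁻¹. Then K̂ − K = [ (I − K H)(Σ̂ − Σ) Hᵀ + K (R − R̂) ] (H Σ̂ Hᵀ + R̂)⁻¹. -/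
open Matrix

/-- For real matrices `Σ, Σ̂` (p×p), `H` (q×p), `R, R̂` (q×q) with
`H Σ Hᵀ + R` and `H Σ̂ Hᵀ + R̂` invertible, the Kalman gains
`K = Σ Hᵀ (H Σ Hᵀ + R)⁻¹` and `K̂ = Σ̂ Hᵀ (H Σ̂ Hᵀ + R̂)⁻¹` satisfy
`K̂ − K = [ (I − K H)(Σ̂ − Σ) Hᵀ + K (R − R̂) ] (H Σ̂ Hᵀ + R̂)⁻¹`. -/
theorem kalman_gain_diff_identity_estimated_R (p q : ℕ) (hp : 0 < p) (hq : 0 < q)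
    (S Shat : Matrix (Fin p) (Fin p) ℝ) (H : Matrix (Fin q) (Fin p) ℝ)
    (R Rhat : Matrix (Fin q) (Fin q) ℝ)
    (h1 : IsUnit (H * S * Hᵀ + R).det) (h2 : IsUnit (H * Shat * Hᵀ + Rhat).det) :
    Shat * Hᵀ * (H * Shat * Hᵀ + Rhat)⁻¹ - S * Hᵀ * (H * S * Hᵀ + R)⁻¹ =
      (((1 : Matrix (Fin p) (Fin p) ℝ) - S * Hᵀ * (H * S * Hᵀ + R)⁻¹ * H) * (Shat - S) * Hᵀ +
          S * Hᵀ * (H * S * Hᵀ + R)⁻¹ * (R - Rhat)) *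
        (H * Shat * Hᵀ + Rhat)⁻¹ := by
  set A := H * S * Hᵀ + R with hAdef
  set B := H * Shat * Hᵀ + Rhat with hBdef
  have hA : A⁻¹ * A = 1 := Matrix.nonsing_inv_mul _ h1
  have hB : B * B⁻¹ = 1 := Matrix.mul_nonsing_inv _ h2
  have key : S * Hᵀ * A⁻¹ * (A - B) = S * Hᵀ - S * Hᵀ * A⁻¹ * B := by
    rw [Matrix.mul_sub, Matrix.mul_assoc, hA, Matrix.mul_one]
  have hAB : A - B = H * (S - Shat) * Hᵀ + (R - Rhat) := by
    rw [hAdef, hBdef, Matrix.mul_sub, Matrix.sub_mul]; abel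
  calc Shat * Hᵀ * B⁻¹ - S * Hᵀ * A⁻¹
      = (Shat * Hᵀ - S * Hᵀ + (S * Hᵀ - S * Hᵀ * A⁻¹ * B)) * B⁻¹ := by
        rw [Matrix.add_mul, Matrix.sub_mul, Matrix.sub_mul,
          Matrix.mul_assoc (S * Hᵀ * A⁻¹) B B⁻¹, hB, Matrix.mul_one]
        abel
    _ = (Shat * Hᵀ - S * Hᵀ + S * Hᵀ * A⁻¹ * (A - B)) * B⁻¹ := by rw [key]
    _ = _ := by
        rw [hAB]
        congr 1
        simp only [Matrix.sub_mul, Matrix.add_mul, Matrix.mul_add, Matrix.mul_sub,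
          Matrix.one_mul, Matrix.mul_one, Matrix.mul_assoc]
        abel
end

section
/- Let p, q be positive integers, Σ a real symmetric positive definite p×p matrix, R a real symmetric positive definite q×q matrix, and H a real q×p matrix. Then the matrices Σ⁻¹ + Hᵀ R⁻¹ H and H Σ Hᵀ + R are symmetric positive definite (hence invertible), and (Σ⁻¹ + Hᵀ R⁻¹ H)⁻¹ Hᵀ R⁻¹ = Σ Hᵀ (H Σ Hᵀ + R)⁻¹. -/
open Matrix

/-- **Sherman–Morrison–Woodbury form of the Kalman gain.** For `Σ` symmetric
positive definite (p×p), `R` symmetric positive definite (q×q) and `H` a q×p matrix, the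
matrices `Σ⁻¹ + Hᵀ R⁻¹ H` and `H Σ Hᵀ + R` are positive definite (hence invertible), and
`(Σ⁻¹ + Hᵀ R⁻¹ H)⁻¹ Hᵀ R⁻¹ = Σ Hᵀ (H Σ Hᵀ + R)⁻¹`. -/
theorem kalman_gain_woodbury (p q : ℕ) (hp : 0 < p) (hq : 0 < q)
    (S : Matrix (Fin p) (Fin p) ℝ) (hS : S.PosDef)
    (R : Matrix (Fin q) (Fin q) ℝ) (hR : R.PosDef)
    (H : Matrix (Fin q) (Fin p) ℝ) :
    (S⁻¹ + Hᵀ * R⁻¹ * H).PosDef ∧ IsUnit (S⁻¹ + Hᵀ * R⁻¹ * H).det ∧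
      (H * S * Hᵀ + R).PosDef ∧ IsUnit (H * S * Hᵀ + R).det ∧
      (S⁻¹ + Hᵀ * R⁻¹ * H)⁻¹ * (Hᵀ * R⁻¹) = S * Hᵀ * (H * S * Hᵀ + R)⁻¹ := by
  have hHt : Hᵀ = Hᴴ := (Matrix.conjTranspose_eq_transpose_of_trivial H).symm
  have hA : (S⁻¹ + Hᵀ * R⁻¹ * H).PosDef := by
    refine hS.inv.add_posSemidef ?_
    have := hR.inv.posSemidef.conjTranspose_mul_mul_same H
    rw [hHt]
    exact this
  have hB : (H * S * Hᵀ + R).PosDef := by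
    refine Matrix.PosDef.posSemidef_add ?_ hR
    have := hS.posSemidef.mul_mul_conjTranspose_same H
    rw [hHt]
    exact this
  have hAdet : IsUnit (S⁻¹ + Hᵀ * R⁻¹ * H).det := hA.det_pos.ne'.isUnit
  have hBdet : IsUnit (H * S * Hᵀ + R).det := hB.det_pos.ne'.isUnit
  refine ⟨hA, hAdet, hB, hBdet, ?_⟩
  have hSinv : S⁻¹ * S = 1 := Matrix.nonsing_inv_mul S hS.det_pos.ne'.isUnit
  have hRinv : R⁻¹ * R = 1 := Matrix.nonsing_inv_mul R hR.det_pos.ne'.isUnit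
  have hBBinv : (H * S * Hᵀ + R) * (H * S * Hᵀ + R)⁻¹ = 1 :=
    Matrix.mul_nonsing_inv _ hBdet
  have key : (S⁻¹ + Hᵀ * R⁻¹ * H) * (S * Hᵀ * (H * S * Hᵀ + R)⁻¹) = Hᵀ * R⁻¹ := by
    have h1 : (S⁻¹ + Hᵀ * R⁻¹ * H) * (S * Hᵀ) = Hᵀ * R⁻¹ * (H * S * Hᵀ + R) := by
      rw [Matrix.add_mul, Matrix.mul_add]
      rw [show S⁻¹ * (S * Hᵀ) = Hᵀ by rw [← Matrix.mul_assoc, hSinv, Matrix.one_mul]]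
      rw [show Hᵀ * R⁻¹ * R = Hᵀ by rw [Matrix.mul_assoc, hRinv, Matrix.mul_one]]
      rw [add_comm]
      rw [Matrix.mul_assoc, Matrix.mul_assoc, Matrix.mul_assoc, Matrix.mul_assoc]
    calc (S⁻¹ + Hᵀ * R⁻¹ * H) * (S * Hᵀ * (H * S * Hᵀ + R)⁻¹)
        = (S⁻¹ + Hᵀ * R⁻¹ * H) * (S * Hᵀ) * (H * S * Hᵀ + R)⁻¹ := by
          rw [← Matrix.mul_assoc]
      _ = Hᵀ * R⁻¹ * ((H * S * Hᵀ + R) * (H * S * Hᵀ + R)⁻¹) := by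
          rw [h1, Matrix.mul_assoc]
      _ = Hᵀ * R⁻¹ := by rw [hBBinv, Matrix.mul_one]
  calc (S⁻¹ + Hᵀ * R⁻¹ * H)⁻¹ * (Hᵀ * R⁻¹)
      = (S⁻¹ + Hᵀ * R⁻¹ * H)⁻¹ * ((S⁻¹ + Hᵀ * R⁻¹ * H) * (S * Hᵀ * (H * S * Hᵀ + R)⁻¹)) := by
        rw [key]
    _ = S * Hᵀ * (H * S * Hᵀ + R)⁻¹ := by
        rw [← Matrix.mul_assoc, Matrix.nonsing_inv_mul _ hAdet, Matrix.one_mul]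
end
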